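/- arXiv:2309.16009 — 6 statements merged into one kernel-verified Lean document; each statement's English description precedes it below -/
import Mathlib

section
/- The Laurent polynomial W = z_1 + z_2 + z_1^{-1}z_2^{-1} with directions v_1=(1,1), v_2=(-2,1), v_3=(1,-2) is an LG seed: for each i, μ_{v_i}(W) is again a Laurent polynomial in C[z_1^{±1}, z_2^{±1}]. -/
set_option maxHeartbeats 1000000

/-- The mutation `μ_v(F)(z₁,z₂) = F(z₁(1+z₁^b z₂^{-a})^{-a}, z₂(1+z₁^b z₂^{-a})^{-b})`. -/
noncomputable def mutFun (v : ℤ × ℤ) (F : ℂ → ℂ → ℂ) : ℂ → ℂ → ℂ := fun z₁ z₂ =>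
  F (z₁ * (1 + z₁ ^ v.2 * z₂ ^ (-v.1)) ^ (-v.1))
    (z₂ * (1 + z₁ ^ v.2 * z₂ ^ (-v.1)) ^ (-v.2))

/-- `G` is (the function defined by) a Laurent polynomial on the locus where `z₁, z₂` are
nonzero and `1 + z₁^b z₂^{-a} ≠ 0` for the direction `v = (a,b)`. -/
def IsLaurentAfterMut (v : ℤ × ℤ) (G : ℂ → ℂ → ℂ) : Prop :=
  ∃ c : (ℤ × ℤ) →₀ ℂ, ∀ z₁ z₂ : ℂ, z₁ ≠ 0 → z₂ ≠ 0 →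
    1 + z₁ ^ v.2 * z₂ ^ (-v.1) ≠ 0 →
    G z₁ z₂ = c.sum fun w a => a * z₁ ^ w.1 * z₂ ^ w.2

/-- The ℂP² potential `W = z₁ + z₂ + z₁⁻¹z₂⁻¹` with directions `(1,1), (-2,1), (1,-2)`
is an LG seed: each mutation of `W` is again a Laurent polynomial. -/
theorem CP2_is_LG_seed :
    ∀ v ∈ ({((1:ℤ),(1:ℤ)), (-2,1), (1,-2)} : Set (ℤ × ℤ)),
      IsLaurentAfterMut v (mutFun v (fun z₁ z₂ => z₁ + z₂ + z₁⁻¹ * z₂⁻¹)) := by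
  rintro v (rfl | rfl | rfl)
  · -- v = (1, 1) : μ_v(W) = z₂ + z₁⁻¹z₂⁻¹ + 2 z₂⁻² + z₁ z₂⁻³
    refine ⟨Finsupp.single ((0:ℤ),(1:ℤ)) (1:ℂ) + Finsupp.single (-1,-1) 1
      + Finsupp.single (0,-2) 2 + Finsupp.single (1,-3) 1, ?_⟩
    intro z₁ z₂ h1 h2 h3
    simp only [mutFun, zpow_one, zpow_neg, zpow_ofNat, pow_one, neg_neg] at h3 ⊢
    have hplus : z₂ + z₁ ≠ 0 := by
      have e : z₂ + z₁ = z₂ * (1 + z₁ * z₂⁻¹) := by field_simp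
      rw [e]; exact mul_ne_zero h2 h3
    rw [Finsupp.sum_add_index, Finsupp.sum_add_index, Finsupp.sum_add_index] <;>
      try (intros; ring)
    simp [Finsupp.sum_single_index, zpow_neg, zpow_ofNat, zpow_one]
    rw [← sub_eq_zero]
    field_simp
    ring
  · -- v = (-2, 1) : μ_v(W) = z₁ + 2 z₁²z₂² + z₁³z₂⁴ + z₁⁻¹z₂⁻¹
    refine ⟨Finsupp.single ((1:ℤ),(0:ℤ)) (1:ℂ) + Finsupp.single (2,2) 2
      + Finsupp.single (3,4) 1 + Finsupp.single (-1,-1) 1, ?_⟩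
    intro z₁ z₂ h1 h2 h3
    simp only [mutFun, zpow_one, zpow_neg, zpow_ofNat, pow_one, neg_neg] at h3 ⊢
    have hd : z₁ + z₁ ^ 2 * z₂ ^ 2 * 2 + z₁ ^ 3 * z₂ ^ 4 ≠ 0 := by
      have e : z₁ + z₁ ^ 2 * z₂ ^ 2 * 2 + z₁ ^ 3 * z₂ ^ 4
          = z₁ * (1 + z₁ * z₂ ^ 2) ^ 2 := by ring
      rw [e]; exact mul_ne_zero h1 (pow_ne_zero 2 h3)
    rw [Finsupp.sum_add_index, Finsupp.sum_add_index, Finsupp.sum_add_index] <;>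
      try (intros; ring)
    simp [Finsupp.sum_single_index, zpow_neg, zpow_ofNat, zpow_one]
    rw [← sub_eq_zero]
    have hd' : 1 + z₁ * z₂ ^ 2 * 2 + z₁ ^ 2 * z₂ ^ 4 ≠ 0 := by
      have e : 1 + z₁ * z₂ ^ 2 * 2 + z₁ ^ 2 * z₂ ^ 4 = (1 + z₁ * z₂ ^ 2) ^ 2 := by ring
      rw [e]; exact pow_ne_zero 2 h3
    field_simp
    ring
  · -- v = (1, -2) : μ_v(W) = z₁ + z₂ + 2 z₁⁻² + z₁⁻⁴z₂⁻¹
    refine ⟨Finsupp.single ((1:ℤ),(0:ℤ)) (1:ℂ) + Finsupp.single (0,1) 1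
      + Finsupp.single (-2,0) 2 + Finsupp.single (-4,-1) 1, ?_⟩
    intro z₁ z₂ h1 h2 h3
    simp only [mutFun, zpow_one, zpow_neg, zpow_ofNat, pow_one, neg_neg] at h3 ⊢
    have hq : 1 + z₁ ^ 2 * z₂ ≠ 0 := by
      have e : 1 + z₁ ^ 2 * z₂ = z₁ ^ 2 * z₂ * (1 + (z₁ ^ 2)⁻¹ * z₂⁻¹) := by
        field_simp; ring
      rw [e]; exact mul_ne_zero (mul_ne_zero (pow_ne_zero 2 h1) h2) h3
    have hd : z₁ ^ 2 * z₂ + 1 ≠ 0 := by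
      intro h; exact hq (by linear_combination h)
    have hD1 : z₁ ^ 6 * z₂ ^ 3 + z₁ ^ 8 * z₂ ^ 4 ≠ 0 := by
      have e : z₁ ^ 6 * z₂ ^ 3 + z₁ ^ 8 * z₂ ^ 4
          = z₁ ^ 6 * z₂ ^ 3 * (1 + z₁ ^ 2 * z₂) := by ring
      rw [e]
      exact mul_ne_zero (mul_ne_zero (pow_ne_zero 6 h1) (pow_ne_zero 3 h2)) hq
    have hD2 : z₁ ^ 5 * z₂ ^ 3 + z₁ ^ 7 * z₂ ^ 4 * 2 + z₁ ^ 9 * z₂ ^ 5 ≠ 0 := by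
      have e : z₁ ^ 5 * z₂ ^ 3 + z₁ ^ 7 * z₂ ^ 4 * 2 + z₁ ^ 9 * z₂ ^ 5
          = z₁ ^ 5 * z₂ ^ 3 * (1 + z₁ ^ 2 * z₂) ^ 2 := by ring
      rw [e]
      exact mul_ne_zero (mul_ne_zero (pow_ne_zero 5 h1) (pow_ne_zero 3 h2)) (pow_ne_zero 2 hq)
    rw [Finsupp.sum_add_index, Finsupp.sum_add_index, Finsupp.sum_add_index] <;>
      try (intros; ring)
    simp [Finsupp.sum_single_index, zpow_neg, zpow_ofNat, zpow_one]
    rw [← sub_eq_zero]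
    have hq' : z₁ ^ 2 * z₂ * 2 + 1 + z₁ ^ 4 * z₂ ^ 2 ≠ 0 := by
      have e : z₁ ^ 2 * z₂ * 2 + 1 + z₁ ^ 4 * z₂ ^ 2 = (1 + z₁ ^ 2 * z₂) ^ 2 := by ring
      rw [e]; exact pow_ne_zero 2 hq
    field_simp
    ring
end

section
/- The Laurent polynomial W = z_1 + z_2 + z_1^{-1} + z_2^{-1} with directions (1,1), (1,-1), (-1,1), (-1,-1) is an LG seed: mutating W in any of these four directions yields a Laurent polynomial. -/
/-- The ℂP¹×ℂP¹ potential `W = z₁ + z₂ + z₁⁻¹ + z₂⁻¹` with directions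
`(1,1), (1,-1), (-1,1), (-1,-1)` is an LG seed. -/
theorem CP1xCP1_is_LG_seed :
    ∀ v ∈ ({((1:ℤ),(1:ℤ)), (1,-1), (-1,1), (-1,-1)} : Set (ℤ × ℤ)),
      IsLaurentAfterMut v (mutFun v (fun z₁ z₂ => z₁ + z₂ + z₁⁻¹ + z₂⁻¹)) := by
  intro v hv
  simp only [Set.mem_insert_iff, Set.mem_singleton_iff] at hv
  rcases hv with rfl | rfl | rfl | rfl
  · refine ⟨Finsupp.single (0,1) 1 + Finsupp.single (-1,0) 1 + Finsupp.single (0,-1) 2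
      + Finsupp.single (1,-2) 1, ?_⟩
    intro z₁ z₂ h₁ h₂ h₃
    simp only [mutFun]
    rw [Finsupp.sum_add_index' (by simp) (by intros; ring),
        Finsupp.sum_add_index' (by simp) (by intros; ring),
        Finsupp.sum_add_index' (by simp) (by intros; ring),
        Finsupp.sum_single_index (by simp), Finsupp.sum_single_index (by simp),
        Finsupp.sum_single_index (by simp), Finsupp.sum_single_index (by simp)]
    simp only [zpow_one, zpow_zero, zpow_neg, zpow_ofNat, mul_one, one_mul] at *
    norm_num at *
    have h₄ : z₂ + z₁ ≠ 0 := by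
      intro h; apply h₃; field_simp; linear_combination h
    have key : 1 + z₁ * z₂⁻¹ = (z₂ + z₁) / z₂ := by field_simp
    rw [key]
    field_simp
    ring
  · refine ⟨Finsupp.single (1,0) 1 + Finsupp.single (0,1) 1 + Finsupp.single (-1,0) 2
      + Finsupp.single (-2,-1) 1, ?_⟩
    intro z₁ z₂ h₁ h₂ h₃
    simp only [mutFun]
    rw [Finsupp.sum_add_index' (by simp) (by intros; ring),
        Finsupp.sum_add_index' (by simp) (by intros; ring),
        Finsupp.sum_add_index' (by simp) (by intros; ring),
        Finsupp.sum_single_index (by simp), Finsupp.sum_single_index (by simp),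
        Finsupp.sum_single_index (by simp), Finsupp.sum_single_index (by simp)]
    simp only [zpow_one, zpow_zero, zpow_neg, zpow_ofNat, mul_one, one_mul] at *
    norm_num at *
    have h₄ : z₁ * z₂ + 1 ≠ 0 := by
      intro h; apply h₃; field_simp; linear_combination h
    have key : 1 + z₁⁻¹ * z₂⁻¹ = (z₁ * z₂ + 1) / (z₁ * z₂) := by field_simp
    have hD : z₁ ^ 3 * z₂ ^ 3 + z₁ ^ 4 * z₂ ^ 4 * 2 + z₁ ^ 5 * z₂ ^ 5 ≠ 0 := by
      have e : z₁ ^ 3 * z₂ ^ 3 + z₁ ^ 4 * z₂ ^ 4 * 2 + z₁ ^ 5 * z₂ ^ 5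
          = z₁ ^ 3 * z₂ ^ 3 * (z₁ * z₂ + 1) ^ 2 := by ring
      rw [e]
      exact mul_ne_zero (mul_ne_zero (pow_ne_zero _ h₁) (pow_ne_zero _ h₂)) (pow_ne_zero _ h₄)
    rw [key, inv_div]
    field_simp [h₄]
    ring
  · refine ⟨Finsupp.single (1,0) 2 + Finsupp.single (2,1) 1 + Finsupp.single (-1,0) 1
      + Finsupp.single (0,-1) 1, ?_⟩
    intro z₁ z₂ h₁ h₂ h₃
    simp only [mutFun]
    rw [Finsupp.sum_add_index' (by simp) (by intros; ring),
        Finsupp.sum_add_index' (by simp) (by intros; ring),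
        Finsupp.sum_add_index' (by simp) (by intros; ring),
        Finsupp.sum_single_index (by simp), Finsupp.sum_single_index (by simp),
        Finsupp.sum_single_index (by simp), Finsupp.sum_single_index (by simp)]
    simp only [zpow_one, zpow_zero, zpow_neg, zpow_ofNat, mul_one, one_mul] at *
    norm_num at *
    field_simp
    ring
  · refine ⟨Finsupp.single (1,0) 1 + Finsupp.single (0,1) 2 + Finsupp.single (-1,2) 1
      + Finsupp.single (0,-1) 1, ?_⟩
    intro z₁ z₂ h₁ h₂ h₃
    simp only [mutFun]
    rw [Finsupp.sum_add_index' (by simp) (by intros; ring),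
        Finsupp.sum_add_index' (by simp) (by intros; ring),
        Finsupp.sum_add_index' (by simp) (by intros; ring),
        Finsupp.sum_single_index (by simp), Finsupp.sum_single_index (by simp),
        Finsupp.sum_single_index (by simp), Finsupp.sum_single_index (by simp)]
    simp only [zpow_one, zpow_zero, zpow_neg, zpow_ofNat, mul_one, one_mul] at *
    norm_num at *
    have h₄ : z₁ + z₂ ≠ 0 := by
      intro h; apply h₃; field_simp; linear_combination h
    have key : 1 + z₁⁻¹ * z₂ = (z₁ + z₂) / z₁ := by field_simp
    rw [key, inv_div]
    field_simp [h₄]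
    ring
end

section
/- Mutation of the matrix B(s) attached to a seed is compatible with seed mutation: if s = (W, v_1,...,v_n) is a seed of vectors in Z^2 and B(s) = ({v_i, v_j})_{i,j}, then B(μ_i s) = μ_i B(s), where μ_i s has directions v_i' = -v_i and v_j' = v_j + [{v_j, v_i}]_+ v_i for j ≠ i, and μ_i B is matrix mutation: b'_{jk} = -b_{jk} if j=i or k=i, and b'_{jk} = b_{jk} + [b_{ji}]_+ [b_{ik}]_+ - [-b_{ji}]_+ [-b_{ik}]_+ otherwise. -/
/-- Symplectic form `{v,w} = ad - bc`. -/
def sympZ (v w : ℤ × ℤ) : ℤ := v.1 * w.2 - v.2 * w.1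

/-- The `B`-matrix of a tuple of vectors: `b_{jk} = {v_j, v_k}`. -/
def Bmat {n : ℕ} (v : Fin n → ℤ × ℤ) : Matrix (Fin n) (Fin n) ℤ :=
  Matrix.of fun j k => sympZ (v j) (v k)

/-- Seed mutation of the directions: `v_i' = -v_i`, `v_j' = v_j + [{v_j,v_i}]_+ v_i`. -/
def seedMut {n : ℕ} (i : Fin n) (v : Fin n → ℤ × ℤ) : Fin n → ℤ × ℤ := fun j =>
  if j = i then -v i else v j + max (sympZ (v j) (v i)) 0 • v i

/-- Matrix mutation `μ_i`. -/
def matMut {n : ℕ} (i : Fin n) (B : Matrix (Fin n) (Fin n) ℤ) : Matrix (Fin n) (Fin n) ℤ :=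
  Matrix.of fun j k =>
    if j = i ∨ k = i then -B j k
    else B j k + max (B j i) 0 * max (B i k) 0 - max (-B j i) 0 * max (-B i k) 0

lemma sympZ_key (x y z : ℤ × ℤ) :
    sympZ (x + max (sympZ x z) 0 • z) (y + max (sympZ y z) 0 • z) =
    sympZ x y + max (sympZ x z) 0 * max (sympZ z y) 0
      - max (-(sympZ x z)) 0 * max (-(sympZ z y)) 0 := by
  have hanti : sympZ y z = -(sympZ z y) := by simp [sympZ]; ring
  have expand : sympZ (x + max (sympZ x z) 0 • z) (y + max (sympZ y z) 0 • z) =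
      sympZ x y + max (sympZ y z) 0 * sympZ x z + max (sympZ x z) 0 * sympZ z y := by
    simp only [sympZ, Prod.fst_add, Prod.snd_add, Prod.smul_fst, Prod.smul_snd, smul_eq_mul]
    ring
  rw [expand, hanti]
  set a := sympZ x z
  set b := sympZ z y
  rcases le_total a 0 with h1 | h1 <;> rcases le_total b 0 with h2 | h2 <;>
    simp [max_eq_left, max_eq_right, h1, h2, neg_nonneg.mpr, neg_nonpos.mpr] <;> ring

/-- Compatibility of the `B`-matrix with seed mutation: `B(μ_i s) = μ_i B(s)`. -/
theorem Bmat_seedMut {n : ℕ} (v : Fin n → ℤ × ℤ) (i : Fin n) :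
    Bmat (seedMut i v) = matMut i (Bmat v) := by
  ext j k
  by_cases hj : j = i <;> by_cases hk : k = i
  · simp [Bmat, seedMut, matMut, hj, hk, sympZ]; ring
  · simp only [Bmat, seedMut, matMut, Matrix.of_apply, hj, hk, if_true, if_false, if_pos,
      or_false, true_or]
    simp [sympZ, Prod.fst_add, Prod.snd_add, Prod.smul_fst, Prod.smul_snd, smul_eq_mul]
    ring
  · simp only [Bmat, seedMut, matMut, Matrix.of_apply, hj, hk, if_true, if_false, if_pos,
      or_true]
    simp [sympZ, Prod.fst_add, Prod.snd_add, Prod.smul_fst, Prod.smul_snd, smul_eq_mul]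
    ring
  · simp only [Bmat, seedMut, matMut, Matrix.of_apply, hj, hk, if_false, or_self]
    exact sympZ_key (v j) (v k) (v i)
end

section
/- The comparison map is compatible with mutations on monomials: for a seed s = (W, v_1,...,v_n) and index i, μ_i^C(Φ_s(z^v)) = Φ_{μ_i s}(μ_i^S(z^v)) for every v ∈ Z^2, where μ_i^C is the cluster x-variable mutation, μ_i^S is the seed mutation of Laurent polynomials, and Φ_s(z^v) = ∏_j x_j^{-(v, v_j)}. -/
/-- `v^⊥ = (b, -a)` for `v = (a, b)`. -/
def perp (v : ℤ × ℤ) : ℤ × ℤ := (v.2, -v.1)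

/-- Standard dot product on `ℤ²`. -/
def dotZ (v w : ℤ × ℤ) : ℤ := v.1 * w.1 + v.2 * w.2

/-- A vector `(a,b) ∈ ℤ²` is primitive if `gcd(a,b) = 1`. -/
def IsPrimitive (v : ℤ × ℤ) : Prop := Int.gcd v.1 v.2 = 1

/-- Compatibility of the comparison map with cluster mutation `μ_i^C` and seed mutation
`μ_i^S`, on Laurent monomials `z^v`: `μ_i^C(Φ_s(z^v)) = Φ_{μ_i s}(μ_i^S(z^v))`. -/
theorem comparison_map_compatible {n : ℕ} (vs : Fin n → ℤ × ℤ)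
    (hprim : ∀ j, IsPrimitive (vs j)) (i : Fin n) (v : ℤ × ℤ)
    (x : Fin n → ℂ) (hx : ∀ j, x j ≠ 0)
    -- the B-matrix and y-variable
    (b : Fin n → Fin n → ℤ) (hb : ∀ j k, b j k = sympZ (vs j) (vs k))
    (y : ℂ) (hy : y = ∏ j, x j ^ b j i) (hy0 : 1 + y ≠ 0)
    -- the mutated x-variables μ_i^C(x)
    (x' : Fin n → ℂ)
    (hx' : ∀ j, x' j = if j = i then
        (x i)⁻¹ * (∏ k, x k ^ max (b i k) 0) * (1 + y) else x j) :
    -- μ_i^C(Φ_s(z^v)) = Φ_{μ_i s}(z^v (1+z^{v_i^⊥})^{-(v_i,v)})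
    (∏ j, x' j ^ (-(dotZ v (vs j))))
      = (∏ j, x j ^ (-(dotZ v (seedMut i vs j)))) *
        (1 + ∏ j, x j ^ (-(dotZ (perp (vs i)) (seedMut i vs j)))) ^ (-(dotZ (vs i) v)) := by
  have hbii : b i i = 0 := by rw [hb]; simp only [sympZ]; ring
  set di : ℤ := dotZ v (vs i) with hdi
  have hdsymm : dotZ (vs i) v = di := by simp only [hdi, dotZ]; ring
  have hanti : ∀ j k, b j k = -(b k j) := by
    intro j k; rw [hb, hb]; simp only [sympZ]; ring
  -- the dots with the mutated seed
  have hdots : ∀ j, dotZ v (seedMut i vs j) =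
      if j = i then -di else dotZ v (vs j) + max (b j i) 0 * di := by
    intro j
    by_cases h : j = i <;>
      simp only [seedMut, h, if_pos, if_neg, if_true, if_false, hdi, dotZ, sympZ, hb,
        Prod.fst_add, Prod.snd_add, Prod.fst_neg, Prod.snd_neg, Prod.smul_fst, Prod.smul_snd,
        smul_eq_mul, ite_true, ite_false] <;> ring
  have hperp : ∀ j, dotZ (perp (vs i)) (seedMut i vs j) =
      if j = i then 0 else b j i := by
    intro j
    by_cases h : j = i <;>
      simp only [seedMut, h, if_pos, if_neg, if_true, if_false, dotZ, sympZ, perp, hb,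
        Prod.fst_add, Prod.snd_add, Prod.fst_neg, Prod.snd_neg, Prod.smul_fst, Prod.smul_snd,
        smul_eq_mul, ite_true, ite_false] <;> ring
  have hy0' : y ≠ 0 := by
    rw [hy]; exact Finset.prod_ne_zero_iff.mpr fun j _ => zpow_ne_zero _ (hx j)
  -- the inner product is y⁻¹
  have hinner : (∏ j, x j ^ (-(dotZ (perp (vs i)) (seedMut i vs j)))) = y⁻¹ := by
    rw [hy, ← Finset.prod_inv_distrib]
    refine Finset.prod_congr rfl fun j _ => ?_
    rw [hperp j]
    by_cases h : j = i
    · subst h; simp [hbii]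
    · simp [h, zpow_neg]
  -- the common normal form exponents
  set A : Fin n → ℤ := fun j =>
    if j = i then di else -(dotZ v (vs j)) - max (b i j) 0 * di with hA
  have key1 : (∏ j, x' j ^ (-(dotZ v (vs j)))) = (∏ j, x j ^ A j) * (1 + y) ^ (-di) := by
    rw [← Finset.mul_prod_erase Finset.univ _ (Finset.mem_univ i),
        ← Finset.mul_prod_erase Finset.univ (fun j => x j ^ A j) (Finset.mem_univ i)]
    have h1 : ∀ j ∈ Finset.univ.erase i,
        x' j ^ (-(dotZ v (vs j))) = x j ^ (-(dotZ v (vs j))) := by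
      intro j hj
      rw [hx' j, if_neg (Finset.mem_erase.mp hj).1]
    rw [Finset.prod_congr rfl h1]
    have h2 : ∀ j ∈ Finset.univ.erase i,
        x j ^ A j = x j ^ (-(dotZ v (vs j))) * x j ^ (max (b i j) 0 * (-di)) := by
      intro j hj
      rw [← zpow_add₀ (hx j)]
      congr 1
      simp only [hA, if_neg (Finset.mem_erase.mp hj).1]
      ring
    rw [Finset.prod_congr rfl h2, Finset.prod_mul_distrib]
    have hP : ((∏ k, x k ^ max (b i k) 0) : ℂ) ^ (-di)
        = ∏ j ∈ Finset.univ.erase i, x j ^ (max (b i j) 0 * (-di)) := by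
      rw [← Finset.prod_zpow]
      have h4 : ∀ k : Fin n, ((x k ^ max (b i k) 0 : ℂ)) ^ (-di)
          = x k ^ (max (b i k) 0 * (-di)) := fun k => (zpow_mul (x k) _ _).symm
      rw [Finset.prod_congr rfl fun k _ => h4 k,
        ← Finset.mul_prod_erase Finset.univ (fun k => x k ^ (max (b i k) 0 * (-di)))
          (Finset.mem_univ i)]
      simp [hbii]
    have h3 : x' i ^ (-di) =
        (x i) ^ di * (∏ j ∈ Finset.univ.erase i, x j ^ (max (b i j) 0 * (-di)))
          * (1 + y) ^ (-di) := by
      rw [hx' i, if_pos rfl, mul_zpow, mul_zpow, hP, inv_zpow, ← zpow_neg, neg_neg]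
    rw [h3]
    simp only [hA, if_pos rfl, ite_true]
    ring
  rw [key1, hinner, hdsymm]
  -- now the right-hand side
  have hfrac : (1 + y⁻¹) = y⁻¹ * (1 + y) := by field_simp; ring
  have hinv : (y⁻¹ : ℂ) ^ (-di) = y ^ di := by rw [inv_zpow, zpow_neg, inv_inv]
  rw [hfrac, mul_zpow, hinv]
  have hypow : (y : ℂ) ^ di = ∏ j, x j ^ (b j i * di) := by
    rw [hy, ← Finset.prod_zpow]
    exact Finset.prod_congr rfl fun j _ => (zpow_mul (x j) _ _).symm
  rw [hypow, ← mul_assoc, ← Finset.prod_mul_distrib]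
  congr 1
  refine Finset.prod_congr rfl fun j _ => ?_
  rw [← zpow_add₀ (hx j), hdots j]
  congr 1
  by_cases h : j = i
  · subst h; simp [hA, hbii]
  · simp only [hA, if_neg h, ite_false]
    have hbij : b i j = -(b j i) := hanti i j
    rw [hbij]
    rcases le_or_gt (b j i) 0 with hc | hc
    · rw [max_eq_right hc, max_eq_left (by omega)]; ring
    · rw [max_eq_left hc.le, max_eq_right (by omega)]; ring
end

section
/- The mutation rule for y-variables follows from that for x-variables: with y_i = ∏_j x_j^{b_{ji}} and y_i' = ∏_j (x_j')^{b'_{ji}} where x' = μ_i(x) and B' = μ_i(B), one has y_i' = y_i^{-1} and y_j' = y_j · y_i^{[b_{ij}]_+} (1+y_i)^{-b_{ij}} for j ≠ i. -/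
open Matrix

private lemma prod_zpow_add' {n : ℕ} (x : Fin n → ℂ) (hx : ∀ j, x j ≠ 0) (e f : Fin n → ℤ) :
    ∏ j, x j ^ (e j + f j) = (∏ j, x j ^ e j) * (∏ j, x j ^ f j) := by
  rw [← Finset.prod_mul_distrib]
  exact Finset.prod_congr rfl fun j _ => zpow_add₀ (hx j) _ _

private lemma prod_zpow_mul' {n : ℕ} (x : Fin n → ℂ) (e : Fin n → ℤ) (m : ℤ) :
    (∏ j, x j ^ e j) ^ m = ∏ j, x j ^ (e j * m) := by
  rw [← Finset.prod_zpow]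
  exact Finset.prod_congr rfl fun j _ => (zpow_mul (x j) (e j) m).symm

private lemma prod_update' {n : ℕ} (x' x : Fin n → ℂ) (i : Fin n)
    (h : ∀ j, j ≠ i → x' j = x j) (hxi : x i ≠ 0) (e : Fin n → ℤ) :
    ∏ j, x' j ^ e j = (x' i) ^ (e i) * ((x i) ^ (e i))⁻¹ * ∏ j, x j ^ e j := by
  rw [← Finset.mul_prod_erase Finset.univ (fun j => x' j ^ e j) (Finset.mem_univ i),
    ← Finset.mul_prod_erase Finset.univ (fun j => x j ^ e j) (Finset.mem_univ i)]
  have hpe : ∏ j ∈ Finset.univ.erase i, x' j ^ e j = ∏ j ∈ Finset.univ.erase i, x j ^ e j :=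
    Finset.prod_congr rfl fun j hj => by rw [h j (Finset.ne_of_mem_erase hj)]
  rw [hpe]
  have hz : (x i) ^ (e i) ≠ 0 := zpow_ne_zero _ hxi
  field_simp

private lemma key_exp' (t c : ℤ) :
    max (-t) 0 * (-c) + max t 0 * max c 0 - max (-t) 0 * max (-c) 0 = t * max c 0 := by
  rcases le_total t 0 with h | h <;> rcases le_total c 0 with h2 | h2
  · rw [max_eq_right h, max_eq_left (neg_nonneg.mpr h), max_eq_right h2,
      max_eq_left (neg_nonneg.mpr h2)]; ring
  · rw [max_eq_right h, max_eq_left (neg_nonneg.mpr h), max_eq_left h2,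
      max_eq_right (neg_nonpos.mpr h2)]; ring
  · rw [max_eq_left h, max_eq_right (neg_nonpos.mpr h), max_eq_right h2,
      max_eq_left (neg_nonneg.mpr h2)]; ring
  · rw [max_eq_left h, max_eq_right (neg_nonpos.mpr h), max_eq_left h2,
      max_eq_right (neg_nonpos.mpr h2)]; ring

/-- The mutation rule for `y`-variables: `y_i' = y_i⁻¹` and
`y_j' = y_j y_i^{[b_{ij}]_+} (1+y_i)^{-b_{ij}}` for `j ≠ i`. -/
theorem y_variable_mutation {n : ℕ} (B : Matrix (Fin n) (Fin n) ℤ) (hB : Bᵀ = -B)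
    (i : Fin n) (x : Fin n → ℂ) (hx : ∀ j, x j ≠ 0)
    (y : Fin n → ℂ) (hy : ∀ k, y k = ∏ j, x j ^ B j k) (hy0 : 1 + y i ≠ 0)
    (x' : Fin n → ℂ)
    (hx' : ∀ j, x' j = if j = i then
        (x i)⁻¹ * (∏ k, x k ^ max (B i k) 0) * (1 + ∏ k, x k ^ (-(B i k))) else x j)
    (y' : Fin n → ℂ) (hy' : ∀ k, y' k = ∏ j, x' j ^ (matMut i B) j k) :
    y' i = (y i)⁻¹ ∧
      ∀ j, j ≠ i → y' j = y j * (y i) ^ max (B i j) 0 * (1 + y i) ^ (-(B i j)) := by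
  have hskew : ∀ j k, B j k = -B k j := by
    intro j k
    have := congrFun (congrFun hB k) j
    simpa [Matrix.transpose_apply] using this
  have hBii : B i i = 0 := by have := hskew i i; omega
  have hxne : ∀ j, j ≠ i → x' j = x j := fun j hj => by rw [hx' j, if_neg hj]
  have hprod_yi : ∏ k, x k ^ (-(B i k)) = y i := by
    rw [hy i]
    exact Finset.prod_congr rfl fun j _ => by rw [← hskew j i]
  set P := ∏ l, x l ^ max (B i l) 0 with hP
  have hx'i : x' i = (x i)⁻¹ * P * (1 + y i) := by
    rw [hx' i, if_pos rfl, hprod_yi]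
  constructor
  · rw [hy' i]
    have h1 : ∀ j, x' j ^ (matMut i B) j i = x j ^ (-(B j i)) := by
      intro j
      have hm : (matMut i B) j i = -(B j i) := by simp [matMut]
      rw [hm]
      by_cases hj : j = i
      · subst hj; rw [hBii]; simp
      · rw [hxne j hj]
    have h2 : ∏ j, x' j ^ (matMut i B) j i = ∏ j, x j ^ (-(B j i)) :=
      Finset.prod_congr rfl fun j _ => h1 j
    rw [h2, hy i, ← Finset.prod_inv_distrib]
    exact Finset.prod_congr rfl fun j _ => zpow_neg (x j) (B j i)
  · intro k hk
    have hEi : (matMut i B) i k = -(B i k) := by simp [matMut]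
    have hexp : ((x i)⁻¹ * P * (1 + y i)) ^ (-(B i k)) * ((x i) ^ (-(B i k)))⁻¹
        = x i ^ (2 * B i k) * P ^ (-(B i k)) * (1 + y i) ^ (-(B i k)) := by
      rw [mul_zpow, mul_zpow, _root_.inv_zpow]
      have h9 : (x i ^ (-(B i k)))⁻¹ = x i ^ (B i k) := by
        rw [← _root_.zpow_neg, neg_neg]
      rw [h9, two_mul, zpow_add₀ (hx i)]
      ring
    have hxi2 : ∏ j, x j ^ (if j = i then 2 * B i k else 0 : ℤ) = x i ^ (2 * B i k) := by
      rw [Finset.prod_eq_single i (fun b _ hb => by rw [if_neg hb, zpow_zero])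
        (fun h => absurd (Finset.mem_univ i) h), if_pos rfl]
    have key : x i ^ (2 * B i k) * P ^ (-(B i k)) * ∏ j, x j ^ (matMut i B) j k
        = y k * y i ^ max (B i k) 0 := by
      rw [← hxi2, hP, prod_zpow_mul' x (fun l => max (B i l) 0) (-(B i k)),
        ← prod_zpow_add' x hx, ← prod_zpow_add' x hx, hy k, hy i,
        prod_zpow_mul' x (fun j => B j i) (max (B i k) 0), ← prod_zpow_add' x hx]
      refine Finset.prod_congr rfl fun j _ => ?_
      congr 1
      by_cases hj : j = i
      · have hm : (matMut i B) j k = -(B j k) := by simp [matMut, hj]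
        rw [hm, if_pos hj, hj, hBii, max_self]
        ring
      · have hor : ¬(j = i ∨ k = i) := not_or.mpr ⟨hj, hk⟩
        have hm : (matMut i B) j k =
            B j k + max (B j i) 0 * max (B i k) 0 - max (-(B j i)) 0 * max (-(B i k)) 0 := by
          simp only [matMut, Matrix.of_apply, if_neg hor]
        rw [hm, if_neg hj, hskew i j]
        have := key_exp' (B j i) (B i k)
        linarith
    have h1 : y' k = x i ^ (2 * B i k) * P ^ (-(B i k)) * (∏ j, x j ^ (matMut i B) j k)
        * (1 + y i) ^ (-(B i k)) := by
      rw [hy' k, prod_update' x' x i hxne (hx i), hEi, hx'i, hexp]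
      ring
    rw [h1, key]
end

section
/- Given the mutation rule for F-polynomials (1+y_i)^{h_i(V)} F_V(y) = (1+y_i')^{h_i(μ_i V)} F_{μ_i V}(y'), the relation g_i(V) = h_i(V) - h_i(μ_i V), and the g-vector mutation rule g_i(μ_i V) = -g_i(V), g_j(μ_i V) = g_j(V) + [b_{ji}]_+ g_i(V) - b_{ji} h_i(V) for j ≠ i, the cluster character is invariant under mutation: x^{g(V)} F_V(y) = (x')^{g(μ_i V)} F_{μ_i V}(y'), where x' = μ_i(x) and y, y' are the y-variables of B and μ_i B respectively. -/
open Matrix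

/-- Mutation invariance of the cluster character: given the mutation rule for
`F`-polynomials, the relation `g_i(V) = h_i(V) - h_i(μ_iV)`, and the `g`-vector mutation
rule, we have `x^{g(V)} F_V(y) = (x')^{g(μ_iV)} F_{μ_iV}(y')`. -/
theorem cluster_character_mutation_invariant {n : ℕ}
    (B : Matrix (Fin n) (Fin n) ℤ) (hB : Bᵀ = -B) (i : Fin n)
    (x : Fin n → ℂ) (hx : ∀ j, x j ≠ 0)
    (y : Fin n → ℂ) (hy : ∀ k, y k = ∏ j, x j ^ B j k) (hy0 : 1 + y i ≠ 0)
    (x' : Fin n → ℂ)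
    (hx' : ∀ j, x' j = if j = i then
        (x i)⁻¹ * (∏ k, x k ^ max (B i k) 0) * (1 + y i) else x j)
    (y' : Fin n → ℂ) (hy' : ∀ k, y' k = ∏ j, x' j ^ (matMut i B) j k)
    -- the data of V and μ_i V
    (F G : (Fin n → ℂ) → ℂ) (gV gMV : Fin n → ℤ) (hV hMV : ℤ)
    -- the mutation rule for F-polynomials
    (hF : (1 + y i) ^ hV * F y = (1 + y' i) ^ hMV * G y')
    -- relation between g- and h-vectors
    (hgh : gV i = hV - hMV)
    -- mutation rule for g-vectors
    (hgi : gMV i = -gV i)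
    (hgj : ∀ j, j ≠ i → gMV j = gV j + max (B j i) 0 * gV i - B j i * hV) :
    (∏ j, x j ^ gV j) * F y = (∏ j, x' j ^ gMV j) * G y' := by
  have hBii : B i i = 0 := by
    have h := congrFun (congrFun hB i) i
    simp only [Matrix.transpose_apply, Matrix.neg_apply] at h
    omega
  have hskew : ∀ j, B i j = - B j i := fun j => by
    have h := congrFun (congrFun hB j) i
    simp only [Matrix.transpose_apply, Matrix.neg_apply] at h
    omega
  have hyne : y i ≠ 0 := by
    rw [hy]
    exact Finset.prod_ne_zero_iff.mpr fun j _ => zpow_ne_zero _ (hx j)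
  have hx'j : ∀ j, j ≠ i → x' j = x j := fun j hj => by rw [hx' j, if_neg hj]
  have hx'i : x' i = (x i)⁻¹ * (∏ k, x k ^ max (B i k) 0) * (1 + y i) := by
    rw [hx' i, if_pos rfl]
  have hy'i : y' i = (y i)⁻¹ := by
    rw [hy' i, hy i, ← Finset.prod_inv_distrib]
    refine Finset.prod_congr rfl fun j _ => ?_
    by_cases hj : j = i
    · subst hj
      simp [matMut, hBii]
    · rw [hx'j j hj, show (matMut i B) j i = -(B j i) by simp [matMut], _root_.zpow_neg]
  have h1y' : 1 + y' i = (1 + y i) * (y i)⁻¹ := by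
    rw [hy'i]
    field_simp
    ring
  have h1y'ne : (1 + y' i) ≠ 0 := by
    rw [h1y']; exact mul_ne_zero hy0 (inv_ne_zero hyne)
  -- compute G y'
  have hG : G y' = (1 + y i) ^ gV i * y i ^ hMV * F y := by
    have hpow : (1 + y' i) ^ hMV ≠ 0 := zpow_ne_zero _ h1y'ne
    refine (mul_left_cancel₀ hpow ?_).symm
    rw [← hF, h1y', mul_zpow, _root_.inv_zpow, ← _root_.zpow_neg]
    have h1 : (1 + y i) ^ hMV * (y i) ^ (-hMV) * ((1 + y i) ^ gV i * y i ^ hMV * F y)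
        = ((1 + y i) ^ hMV * (1 + y i) ^ gV i) * ((y i) ^ (-hMV) * y i ^ hMV) * F y := by
      ring
    rw [h1, ← zpow_add₀ hy0, ← zpow_add₀ hyne,
      show hMV + gV i = hV by omega, show -hMV + hMV = 0 by ring, zpow_zero, mul_one]
  -- the key product computation
  set P := ∏ k, x k ^ max (B i k) 0 with hPdef
  set D := ∏ j, x j ^ (gV j + B j i * (gV i - hV)) with hDdef
  have e1 : ∏ j, x' j ^ gMV j
      = x' i ^ gMV i * ∏ j ∈ Finset.univ.erase i, x j ^ gMV j := by
    rw [← Finset.mul_prod_erase Finset.univ _ (Finset.mem_univ i)]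
    congr 1
    exact Finset.prod_congr rfl fun j hj => by rw [hx'j j (Finset.ne_of_mem_erase hj)]
  -- claim A
  have hmaxeq : ∀ a : ℤ, max a 0 = a + max (-a) 0 := fun a => by omega
  have eA : ∏ j ∈ Finset.univ.erase i, x j ^ gMV j
      = (D * (x i ^ gV i)⁻¹) * ∏ j ∈ Finset.univ.erase i, x j ^ (max (-B j i) 0 * gV i) := by
    have hD : D = x i ^ gV i * ∏ j ∈ Finset.univ.erase i,
        x j ^ (gV j + B j i * (gV i - hV)) := by
      rw [hDdef, ← Finset.mul_prod_erase Finset.univ _ (Finset.mem_univ i), hBii]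
      norm_num
    rw [hD]
    rw [show x i ^ gV i * (∏ j ∈ Finset.univ.erase i, x j ^ (gV j + B j i * (gV i - hV)))
        * (x i ^ gV i)⁻¹ * ∏ j ∈ Finset.univ.erase i, x j ^ (max (-B j i) 0 * gV i)
      = (x i ^ gV i * (x i ^ gV i)⁻¹) *
        ((∏ j ∈ Finset.univ.erase i, x j ^ (gV j + B j i * (gV i - hV)))
          * ∏ j ∈ Finset.univ.erase i, x j ^ (max (-B j i) 0 * gV i)) by ring,
      mul_inv_cancel₀ (zpow_ne_zero _ (hx i)), one_mul, ← Finset.prod_mul_distrib]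
    refine Finset.prod_congr rfl fun j hj => ?_
    rw [hgj j (Finset.ne_of_mem_erase hj), ← zpow_add₀ (hx j)]
    congr 1
    have := hmaxeq (B j i)
    linear_combination gV i * this
  -- claim B
  have eB : x' i ^ gMV i * ∏ j ∈ Finset.univ.erase i, x j ^ (max (-B j i) 0 * gV i)
      = x i ^ gV i * (1 + y i) ^ (-gV i) := by
    have hPerase : ∏ j ∈ Finset.univ.erase i, x j ^ (max (-B j i) 0 * gV i)
        = ∏ j, x j ^ (max (-B j i) 0 * gV i) := by
      rw [← Finset.mul_prod_erase Finset.univ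
        (fun j => x j ^ (max (-B j i) 0 * gV i)) (Finset.mem_univ i), hBii]
      norm_num
    have hP2 : P = ∏ k, x k ^ max (-B k i) 0 := by
      exact Finset.prod_congr rfl fun k _ => by rw [hskew k]
    have hPzpow : P ^ (-gV i) = ∏ k, x k ^ (max (-B k i) 0 * (-gV i)) := by
      rw [hP2, ← Finset.prod_zpow]
      exact Finset.prod_congr rfl fun k _ => by rw [← _root_.zpow_mul]
    rw [hPerase, hx'i, hgi, mul_zpow, mul_zpow, _root_.inv_zpow, ← _root_.zpow_neg, neg_neg, hPzpow]
    rw [show x i ^ gV i * (∏ k, x k ^ (max (-B k i) 0 * (-gV i))) * (1 + y i) ^ (-gV i)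
        * ∏ j, x j ^ (max (-B j i) 0 * gV i)
      = x i ^ gV i * (1 + y i) ^ (-gV i) *
        ((∏ k, x k ^ (max (-B k i) 0 * (-gV i))) * ∏ j, x j ^ (max (-B j i) 0 * gV i)) by ring,
      ← Finset.prod_mul_distrib]
    have : ∀ k : Fin n, x k ^ (max (-B k i) 0 * (-gV i)) * x k ^ (max (-B k i) 0 * gV i)
        = 1 := fun k => by
      rw [← zpow_add₀ (hx k), show max (-B k i) 0 * (-gV i) + max (-B k i) 0 * gV i = 0 by ring,
        zpow_zero]
    rw [Finset.prod_congr rfl fun k _ => this k, Finset.prod_const_one, mul_one]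
  -- claim C
  have eC : D = (∏ j, x j ^ gV j) * (y i) ^ (-hMV) := by
    rw [hDdef]
    have : ∀ j : Fin n, x j ^ (gV j + B j i * (gV i - hV))
        = x j ^ gV j * (x j ^ B j i) ^ (gV i - hV) := fun j => by
      rw [← _root_.zpow_mul, ← zpow_add₀ (hx j)]
    rw [Finset.prod_congr rfl fun j _ => this j, Finset.prod_mul_distrib,
      Finset.prod_zpow, ← hy i, show gV i - hV = -hMV by omega]
  -- assemble
  have hprod : ∏ j, x' j ^ gMV j
      = (∏ j, x j ^ gV j) * ((1 + y i) ^ (-gV i) * (y i) ^ (-hMV)) := by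
    rw [e1, eA, show x' i ^ gMV i * (D * (x i ^ gV i)⁻¹
        * ∏ j ∈ Finset.univ.erase i, x j ^ (max (-B j i) 0 * gV i))
      = (x' i ^ gMV i * ∏ j ∈ Finset.univ.erase i, x j ^ (max (-B j i) 0 * gV i))
        * (D * (x i ^ gV i)⁻¹) by ring, eB, eC]
    rw [show x i ^ gV i * (1 + y i) ^ (-gV i) * ((∏ j, x j ^ gV j) * y i ^ (-hMV)
        * (x i ^ gV i)⁻¹)
      = (x i ^ gV i * (x i ^ gV i)⁻¹) * ((∏ j, x j ^ gV j)
        * ((1 + y i) ^ (-gV i) * y i ^ (-hMV))) by ring,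
      mul_inv_cancel₀ (zpow_ne_zero _ (hx i)), one_mul]
  rw [hprod, hG]
  have c1 : (1 + y i) ^ (-gV i) * (1 + y i) ^ gV i = 1 := by
    rw [← zpow_add₀ hy0, neg_add_cancel, zpow_zero]
  have c2 : (y i) ^ (-hMV) * (y i) ^ hMV = 1 := by
    rw [← zpow_add₀ hyne, neg_add_cancel, zpow_zero]
  calc (∏ j, x j ^ gV j) * F y
      = (∏ j, x j ^ gV j) * (((1 + y i) ^ (-gV i) * (1 + y i) ^ gV i)
        * ((y i) ^ (-hMV) * (y i) ^ hMV)) * F y := by rw [c1, c2]; ring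
    _ = (∏ j, x j ^ gV j) * ((1 + y i) ^ (-gV i) * y i ^ (-hMV))
        * ((1 + y i) ^ gV i * y i ^ hMV * F y) := by ring
end
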